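/- arXiv:2011.11064 — 7 statements merged into one kernel-verified Lean document; each statement's English description precedes it below -/
import Mathlib

section
/- In the bipartite incidence graph $D_k(q)$ with $k \ge 2$, any two distinct points of $\mathbb{F}_q^k$ lie on at most one common moment-curve line; equivalently, $D_k(q)$ contains no cycle of length 4. -/
/-- The moment-curve vector `(1, z, z^2, ..., z^(k-1))` in `F^k`. -/
def mvec (k : ℕ) {F : Type} [Field F] (z : F) : Fin k → F := fun j => z ^ (j : ℕ)

/-- The moment-curve line through `x` with direction parameter `z`. -/
def mline (k : ℕ) {F : Type} [Field F] (x : Fin k → F) (z : F) : Set (Fin k → F) :=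
  {p | ∃ y : F, p = x + y • mvec k z}

lemma mline_mem_eq (k : ℕ) {F : Type} [Field F] (x : Fin k → F) (z : F)
    (p : Fin k → F) (hp : p ∈ mline k x z) : mline k x z = mline k p z := by
  obtain ⟨a, ha⟩ := hp
  ext q
  constructor
  · rintro ⟨y, rfl⟩
    exact ⟨y - a, by rw [ha]; module⟩
  · rintro ⟨y, rfl⟩
    exact ⟨a + y, by rw [ha]; module⟩

/-- For `k ≥ 2`, two distinct points lie on at most one common moment-curve line,
i.e. `D_k(q)` has no cycle of length 4. -/
theorem stmt_6 (k : ℕ) (hk : 2 ≤ k) (F : Type) [Field F] [Fintype F]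
    (p p' : Fin k → F) (hpp : p ≠ p')
    (L L' : Set (Fin k → F))
    (hL : ∃ x z, L = mline k x z) (hL' : ∃ x z, L' = mline k x z)
    (h1 : p ∈ L) (h2 : p' ∈ L) (h3 : p ∈ L') (h4 : p' ∈ L') :
    L = L' := by
  obtain ⟨x, z, rfl⟩ := hL
  obtain ⟨x', z', rfl⟩ := hL'
  obtain ⟨a, ha⟩ := h1
  obtain ⟨b, hb⟩ := h2
  obtain ⟨a', ha'⟩ := h3
  obtain ⟨b', hb'⟩ := h4
  have key : (a - b) • mvec k z = (a' - b') • mvec k z' := by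
    have h : p - p' = (a - b) • mvec k z := by rw [ha, hb]; module
    have h' : p - p' = (a' - b') • mvec k z' := by rw [ha', hb']; module
    rw [← h, ← h']
  set i0 : Fin k := ⟨0, by omega⟩
  set i1 : Fin k := ⟨1, by omega⟩
  have k0 := congrFun key i0
  have k1 := congrFun key i1
  simp only [Pi.smul_apply, mvec, smul_eq_mul, i0, i1] at k0 k1
  norm_num at k0 k1
  have hab : a - b ≠ 0 := by
    intro h0
    apply hpp
    have : a = b := by linear_combination h0
    rw [ha, hb, this]
  have hz : z = z' := by
    rw [← k0] at k1
    exact mul_left_cancel₀ hab k1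
  subst hz
  rw [mline_mem_eq k x z p ⟨a, ha⟩, mline_mem_eq k x' z p ⟨a', ha'⟩]
end

section
/- For $k \ge 3$, the bipartite incidence graph $D_k(q)$ contains no cycle of length 6. Equivalently, there do not exist three distinct points $p_1, p_2, p_3 \in \mathbb{F}_q^k$ and three distinct moment-curve lines $\ell_1, \ell_2, \ell_3$ with $p_i, p_{i+1} \in \ell_i$ (indices mod 3). -/
lemma mline_diff {k : ℕ} {F : Type} [Field F] {x : Fin k → F} {z : F} {a b : Fin k → F}
    (ha : a ∈ mline k x z) (hb : b ∈ mline k x z) :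
    ∃ y : F, (∀ j, b j - a j = y * mvec k z j) ∧ (a ≠ b → y ≠ 0) := by
  obtain ⟨u, hu⟩ := ha
  obtain ⟨v, hv⟩ := hb
  refine ⟨v - u, fun j => by simp [hu, hv]; ring, fun hab hy => hab ?_⟩
  have huv : v = u := by linear_combination hy
  rw [hu, hv, huv]

lemma mline_eq_of_mem {k : ℕ} {F : Type} [Field F] {x q : Fin k → F} {z : F}
    (hq : q ∈ mline k x z) : mline k x z = mline k q z := by
  obtain ⟨u, hu⟩ := hq
  ext r
  constructor
  · rintro ⟨v, rfl⟩
    exact ⟨v - u, by funext j; simp [hu]; ring⟩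
  · rintro ⟨v, rfl⟩
    exact ⟨u + v, by funext j; simp [hu]; ring⟩

/-- For `k ≥ 3`, `D_k(q)` contains no cycle of length 6. -/
theorem stmt_7 (k : ℕ) (hk : 3 ≤ k) (F : Type) [Field F] [Fintype F]
    (p : Fin 3 → (Fin k → F)) (hp : Function.Injective p)
    (L : Fin 3 → Set (Fin k → F)) (hLinj : Function.Injective L)
    (hL : ∀ i, ∃ x z, L i = mline k x z)
    (hinc : ∀ i, p i ∈ L i ∧ p (i + 1) ∈ L i) :
    False := by
  obtain ⟨x0, z0, h0⟩ := hL 0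
  obtain ⟨x1, z1, h1⟩ := hL 1
  obtain ⟨x2, z2, h2⟩ := hL 2
  have i0 := hinc 0
  have i1 := hinc 1
  have i2 := hinc 2
  rw [h0] at i0
  rw [h1] at i1
  rw [h2] at i2
  have e01 : ((0:Fin 3)+1) = 1 := rfl
  have e12 : ((1:Fin 3)+1) = 2 := rfl
  have e20 : ((2:Fin 3)+1) = 0 := rfl
  rw [e01] at i0
  rw [e12] at i1
  rw [e20] at i2
  -- distinct points
  have hp01 : p 0 ≠ p 1 := fun h => by have := hp h; simp at this
  have hp12 : p 1 ≠ p 2 := fun h => by have := hp h; simp at this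
  have hp20 : p 2 ≠ p 0 := fun h => by have := hp h; simp at this
  -- distinct z's (otherwise two lines coincide)
  have hz01 : z0 ≠ z1 := by
    intro h
    apply absurd (hLinj (a₁ := 0) (a₂ := 1) ?_) (by simp)
    rw [h0, h1, mline_eq_of_mem i0.2, mline_eq_of_mem i1.1, h]
  have hz12 : z1 ≠ z2 := by
    intro h
    apply absurd (hLinj (a₁ := 1) (a₂ := 2) ?_) (by simp)
    rw [h1, h2, mline_eq_of_mem i1.2, mline_eq_of_mem i2.1, h]
  have hz02 : z0 ≠ z2 := by
    intro h
    apply absurd (hLinj (a₁ := 0) (a₂ := 2) ?_) (by simp)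
    rw [h0, h2, mline_eq_of_mem i0.1, mline_eq_of_mem i2.2, h]
  -- differences
  obtain ⟨y0, hy0, hy0ne⟩ := mline_diff i0.1 i0.2
  obtain ⟨y1, hy1, hy1ne⟩ := mline_diff i1.1 i1.2
  obtain ⟨y2, hy2, hy2ne⟩ := mline_diff i2.1 i2.2
  have hy0' := hy0ne hp01
  have hy1' := hy1ne hp12
  have hy2' := hy2ne hp20
  -- coordinate equations
  have key : ∀ m : ℕ, m < k → y0 * z0 ^ m + y1 * z1 ^ m + y2 * z2 ^ m = 0 := by
    intro m hm
    have a0 := hy0 ⟨m, hm⟩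
    have a1 := hy1 ⟨m, hm⟩
    have a2 := hy2 ⟨m, hm⟩
    simp only [mvec] at a0 a1 a2
    linear_combination -a0 - a1 - a2
  have k0 := key 0 (by omega)
  have k1 := key 1 (by omega)
  have k2 := key 2 (by omega)
  simp only [pow_zero, pow_one] at k0 k1 k2
  have : y0 * ((z0 - z1) * (z0 - z2)) = 0 := by
    linear_combination k2 - (z1 + z2) * k1 + z1 * z2 * k0
  rcases mul_eq_zero.1 this with h | h
  · exact hy0' h
  · rcases mul_eq_zero.1 h with h' | h'
    · exact hz01 (by linear_combination h')
    · exact hz02 (by linear_combination h')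
end

section
/- For $k \ge 5$, the bipartite incidence graph $D_k(q)$ contains no cycle of length 10: there do not exist five distinct points $p_1, \dots, p_5 \in \mathbb{F}_q^k$ and five distinct moment-curve lines $\ell_1, \dots, \ell_5$ with $p_i, p_{i+1} \in \ell_i$ for all $i$ (indices mod 5). -/
lemma mline_self {k : ℕ} {F : Type} [Field F] {x q : Fin k → F} {z : F}
    (h : q ∈ mline k x z) : mline k x z = mline k q z := by
  obtain ⟨y0, rfl⟩ := h
  ext r
  constructor
  · rintro ⟨y, rfl⟩; exact ⟨y - y0, by module⟩
  · rintro ⟨y, rfl⟩; exact ⟨y0 + y, by module⟩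

lemma vand {F : Type} [Field F] (S : Finset F) (c : F → F)
    (h : ∀ j : ℕ, j < S.card → ∑ w ∈ S, c w * w ^ j = 0) :
    ∀ w ∈ S, c w = 0 := by
  intro w0 hw0
  classical
  set g : Polynomial F := ∏ v ∈ S.erase w0, (Polynomial.X - Polynomial.C v) with hg
  have hmonic : g.Monic := Polynomial.monic_prod_of_monic _ _ fun v _ => Polynomial.monic_X_sub_C v
  have hdeg : g.natDegree = (S.erase w0).card := by
    rw [hg, Polynomial.natDegree_prod _ _ fun v _ => Polynomial.X_sub_C_ne_zero v]
    simp
  have hdeg' : g.natDegree + 1 ≤ S.card := by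
    rw [hdeg, Finset.card_erase_of_mem hw0]
    have : 1 ≤ S.card := Finset.card_pos.2 ⟨w0, hw0⟩
    omega
  have key : ∑ w ∈ S, c w * g.eval w = 0 := by
    have : ∀ w : F, g.eval w = ∑ j ∈ Finset.range (g.natDegree + 1), g.coeff j * w ^ j := by
      intro w; exact Polynomial.eval_eq_sum_range w
    simp_rw [this, Finset.mul_sum]
    rw [Finset.sum_comm]
    have : ∀ j ∈ Finset.range (g.natDegree + 1),
        ∑ w ∈ S, c w * (g.coeff j * w ^ j) = 0 := by
      intro j hj
      rw [Finset.mem_range] at hj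
      have := h j (lt_of_lt_of_le hj hdeg')
      calc ∑ w ∈ S, c w * (g.coeff j * w ^ j)
          = g.coeff j * ∑ w ∈ S, c w * w ^ j := by
            rw [Finset.mul_sum]; apply Finset.sum_congr rfl; intros; ring
        _ = 0 := by rw [this, mul_zero]
    exact Finset.sum_eq_zero this
  have hsingle : ∑ w ∈ S, c w * g.eval w = c w0 * g.eval w0 := by
    apply Finset.sum_eq_single
    · intro w hw hne
      have : g.eval w = 0 := by
        rw [hg, Polynomial.eval_prod]
        apply Finset.prod_eq_zero (Finset.mem_erase.2 ⟨hne, hw⟩)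
        simp
      rw [this, mul_zero]
    · intro h'; exact absurd hw0 h'
  have hev : g.eval w0 ≠ 0 := by
    rw [hg, Polynomial.eval_prod]
    apply Finset.prod_ne_zero_iff.2
    intro v hv
    simp only [Polynomial.eval_sub, Polynomial.eval_X, Polynomial.eval_C]
    exact sub_ne_zero.2 (Ne.symm (Finset.mem_erase.1 hv).1)
  rw [hsingle] at key
  exact (mul_eq_zero.1 key).resolve_right hev

lemma comb {α : Type} (z : Fin 5 → α) (hadj : ∀ i, z i ≠ z (i + 1))
    (hfib : ∀ i, ∃ j, j ≠ i ∧ z j = z i) : False := by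
  have h01 : z 0 ≠ z 1 := by simpa using hadj 0
  have h12 : z 1 ≠ z 2 := by simpa using hadj 1
  have h23 : z 2 ≠ z 3 := by simpa using hadj 2
  have h34 : z 3 ≠ z 4 := by simpa using hadj 3
  have h40 : z 4 ≠ z 0 := by simpa using hadj 4
  obtain ⟨a, ha, ha'⟩ := hfib 0
  fin_cases a
  · exact ha rfl
  · exact h01 ha'.symm
  · -- ha' : z 2 = z 0
    obtain ⟨b, hb, hb'⟩ := hfib 1
    fin_cases b
    · exact h01 hb'
    · exact hb rfl
    · exact h12 hb'.symm
    · -- hb' : z 3 = z 1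
      obtain ⟨e, he, he'⟩ := hfib 4
      fin_cases e
      · exact h40 he'.symm
      · exact h34 (hb'.trans he')
      · exact h40 (he'.symm.trans ha')
      · exact h34 he'
      · exact he rfl
    · -- hb' : z 4 = z 1
      obtain ⟨d, hd, hd'⟩ := hfib 3
      fin_cases d
      · exact h23 (ha'.trans hd')
      · exact h34 (hb'.trans hd').symm
      · exact h23 hd'
      · exact hd rfl
      · exact h34 hd'.symm
  · -- ha' : z 3 = z 0
    obtain ⟨e, he, he'⟩ := hfib 4
    fin_cases e
    · exact h40 he'.symm
    · -- he' : z 1 = z 4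
      obtain ⟨cc, hc2, hc'⟩ := hfib 2
      fin_cases cc
      · exact h23 (ha'.trans hc').symm
      · exact h12 hc'
      · exact hc2 rfl
      · exact h23 hc'.symm
      · exact h12 (he'.trans hc')
    · -- he' : z 2 = z 4
      obtain ⟨b, hb, hb'⟩ := hfib 1
      fin_cases b
      · exact h01 hb'
      · exact hb rfl
      · exact h12 hb'.symm
      · exact h01 (ha'.symm.trans hb')
      · exact h12 (he'.trans hb').symm
    · exact h34 he'
    · exact he rfl
  · exact h40 ha'

/-- For `k ≥ 5`, `D_k(q)` contains no cycle of length 10. -/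
theorem stmt_8 (k : ℕ) (hk : 5 ≤ k) (F : Type) [Field F] [Fintype F]
    (p : Fin 5 → (Fin k → F)) (hp : Function.Injective p)
    (L : Fin 5 → Set (Fin k → F)) (hLinj : Function.Injective L)
    (hL : ∀ i, ∃ x z, L i = mline k x z)
    (hinc : ∀ i, p i ∈ L i ∧ p (i + 1) ∈ L i) :
    False := by
  classical
  choose x z hxz using hL
  have hne : ∀ i : Fin 5, i + 1 ≠ i := by decide
  have hmem : ∀ i, ∃ y : F, p (i + 1) - p i = y • mvec k (z i) ∧ y ≠ 0 := by
    intro i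
    have h1 := (hinc i).1
    have h2 := (hinc i).2
    rw [hxz i] at h1 h2
    obtain ⟨a, ha⟩ := h1
    obtain ⟨b, hb⟩ := h2
    refine ⟨b - a, by rw [ha, hb]; module, ?_⟩
    intro h0
    have hba : b = a := by rwa [sub_eq_zero] at h0
    have : p (i + 1) = p i := by rw [ha, hb, hba]
    exact hne i (hp this)
  choose y hy hy0 using hmem
  have hzadj : ∀ i : Fin 5, z i ≠ z (i + 1) := by
    intro i h
    have m1 : p (i + 1) ∈ mline k (x i) (z i) := by rw [← hxz i]; exact (hinc i).2
    have m2 : p (i + 1) ∈ mline k (x (i + 1)) (z (i + 1)) := by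
      rw [← hxz (i + 1)]; exact (hinc (i + 1)).1
    have e1 : L i = mline k (p (i + 1)) (z i) := by rw [hxz i]; exact mline_self m1
    have e2 : L (i + 1) = mline k (p (i + 1)) (z (i + 1)) := by
      rw [hxz (i + 1)]; exact mline_self m2
    have : L (i + 1) = L i := by rw [e1, e2, h]
    exact hne i (hLinj this)
  have hsum : ∑ i : Fin 5, y i • mvec k (z i) = 0 := by
    have htel : ∑ i : Fin 5, (p (i + 1) - p i) = 0 := by
      rw [Finset.sum_sub_distrib, sub_eq_zero]
      exact (Fintype.sum_equiv (Equiv.addRight (1 : Fin 5)) (fun i => p (i + 1)) p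
        (fun i => rfl)).symm ▸ rfl
    calc ∑ i : Fin 5, y i • mvec k (z i)
        = ∑ i : Fin 5, (p (i + 1) - p i) :=
          Finset.sum_congr rfl fun i _ => (hy i).symm
      _ = 0 := htel
  have hcoord : ∀ m : Fin k, ∑ i : Fin 5, y i * (z i) ^ (m : ℕ) = 0 := by
    intro m
    have := congrFun hsum m
    simpa [mvec, Finset.sum_apply] using this
  set S : Finset F := Finset.univ.image z with hS
  set c : F → F := fun w => ∑ i ∈ Finset.univ.filter (fun i => z i = w), y i with hc
  have hcard : S.card ≤ 5 := le_trans (Finset.card_image_le) (by simp)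
  have hSfib : ∀ j : ℕ, j < S.card → ∑ w ∈ S, c w * w ^ j = 0 := by
    intro j hj
    have hjk : j < k := lt_of_lt_of_le (lt_of_lt_of_le hj hcard) hk
    have hgrp := Finset.sum_fiberwise_of_maps_to
      (fun i (_ : i ∈ Finset.univ) => Finset.mem_image_of_mem z (Finset.mem_univ i))
      (fun i => y i * (z i) ^ j)
    have hinner : ∀ w ∈ S,
        ∑ i ∈ Finset.univ.filter (fun i => z i = w), (y i * (z i) ^ j) = c w * w ^ j := by
      intro w _
      rw [hc, Finset.sum_mul]
      apply Finset.sum_congr rfl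
      intro i hi
      rw [(Finset.mem_filter.1 hi).2]
    calc ∑ w ∈ S, c w * w ^ j
        = ∑ w ∈ S, ∑ i ∈ Finset.univ.filter (fun i => z i = w), (y i * (z i) ^ j) :=
          (Finset.sum_congr rfl hinner).symm
      _ = ∑ i : Fin 5, y i * (z i) ^ j := hgrp
      _ = 0 := hcoord ⟨j, hjk⟩
  have hc0 := vand S c hSfib
  have hfib : ∀ i : Fin 5, ∃ j, j ≠ i ∧ z j = z i := by
    intro i
    by_contra hcon
    push_neg at hcon
    have hfilt : Finset.univ.filter (fun j => z j = z i) = {i} := by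
      ext j
      simp only [Finset.mem_filter, Finset.mem_univ, true_and, Finset.mem_singleton]
      constructor
      · intro hzj
        by_contra hji
        exact hcon j hji hzj
      · rintro rfl; rfl
    have := hc0 (z i) (Finset.mem_image_of_mem z (Finset.mem_univ i))
    rw [hc] at this
    simp only [hfilt, Finset.sum_singleton] at this
    exact hy0 i this
  exact comb z hzadj hfib
end

section
/- In any cycle $p_1 \ell_1 p_2 \ell_2 \cdots p_t \ell_t p_1$ of the incidence graph $D_k(q)$ with $t \le k$, every line $\ell_i$ has some other line $\ell_{i'}$ ($i' \neq i$) in the cycle parallel to it (i.e., with the same direction parameter $z$). -/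
/-- In any cycle of length `2t` with `t ≤ k`, every line has another line of the
cycle parallel to it (same direction parameter). -/
theorem stmt_10 (k t : ℕ) [NeZero t] (ht2 : 2 ≤ t) (htk : t ≤ k) (F : Type) [Field F] [Fintype F]
    (p : Fin t → (Fin k → F)) (hp : Function.Injective p)
    (x : Fin t → (Fin k → F)) (z : Fin t → F)
    (hLinj : Function.Injective (fun i => mline k (x i) (z i)))
    (hinc : ∀ i, p i ∈ mline k (x i) (z i) ∧ p (i + 1) ∈ mline k (x i) (z i)) :
    ∀ i, ∃ i', i' ≠ i ∧ z i' = z i := by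
  classical
  intro i
  by_contra hcon
  push_neg at hcon
  simp only [mline, Set.mem_setOf_eq] at hinc
  choose w hw using fun j => (hinc j).1
  choose y hy using fun j => (hinc j).2
  set c : Fin t → F := fun j => y j - w j with hc
  have hstep : ∀ j, c j • mvec k (z j) = p (j + 1) - p j := by
    intro j
    rw [hy j, hw j, hc, sub_smul]
    abel
  have hsum : ∑ j, c j • mvec k (z j) = 0 := by
    rw [Finset.sum_congr rfl (fun j _ => hstep j), Finset.sum_sub_distrib,
      show ∑ j, p (j + 1) = ∑ j, p j from Fintype.sum_equiv (Equiv.addRight (1 : Fin t)) _ _ (fun j => rfl),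
      sub_self]
  have hone : (1 : Fin t) ≠ 0 := by
    intro h
    have := congrArg Fin.val h
    rw [Fin.val_one', Nat.mod_eq_of_lt (by omega)] at this
    simp at this
  have hci : c i ≠ 0 := by
    intro h0
    have hyw : y i = w i := sub_eq_zero.mp h0
    have : p (i + 1) = p i := by rw [hy i, hw i, hyw]
    have h1 := hp this
    exact hone (by rwa [← add_left_cancel_iff (a := i), add_zero])
  set Q : Polynomial F := ∏ j ∈ Finset.univ.erase i, (Polynomial.X - Polynomial.C (z j)) with hQ
  have hdeg : Q.natDegree < k := by
    have h1 : Q.natDegree = (Finset.univ.erase i).card := by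
      rw [hQ, Polynomial.natDegree_prod_of_monic _ _ (fun j _ => Polynomial.monic_X_sub_C _)]
      simp [Polynomial.natDegree_X_sub_C]
    rw [h1, Finset.card_erase_of_mem (Finset.mem_univ i), Finset.card_univ, Fintype.card_fin]
    omega
  have hQi : Q.eval (z i) ≠ 0 := by
    rw [hQ, Polynomial.eval_prod]
    refine Finset.prod_ne_zero_iff.mpr fun j hj => ?_
    simp only [Polynomial.eval_sub, Polynomial.eval_X, Polynomial.eval_C]
    exact sub_ne_zero.mpr (fun h => hcon j (Finset.ne_of_mem_erase hj) h.symm)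
  have hQj : ∀ j, j ≠ i → Q.eval (z j) = 0 := by
    intro j hj
    rw [hQ, Polynomial.eval_prod]
    exact Finset.prod_eq_zero (Finset.mem_erase.mpr ⟨hj, Finset.mem_univ j⟩) (by simp)
  have hcoord : ∀ m : ℕ, m < k → ∑ j, c j * (z j) ^ m = 0 := by
    intro m hm
    have := congrFun hsum ⟨m, hm⟩
    simpa [mvec, Finset.sum_apply, Pi.smul_apply] using this
  have key : ∑ j, c j * Q.eval (z j) = 0 := by
    have hev : ∀ j : Fin t, Q.eval (z j) = ∑ m ∈ Finset.range k, Q.coeff m * (z j) ^ m :=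
      fun j => Polynomial.eval_eq_sum_range' hdeg _
    calc ∑ j, c j * Q.eval (z j)
        = ∑ j, ∑ m ∈ Finset.range k, Q.coeff m * (c j * (z j) ^ m) := by
          refine Finset.sum_congr rfl fun j _ => ?_
          rw [hev j, Finset.mul_sum]
          exact Finset.sum_congr rfl fun m _ => by ring
      _ = ∑ m ∈ Finset.range k, Q.coeff m * ∑ j, c j * (z j) ^ m := by
          rw [Finset.sum_comm]
          exact Finset.sum_congr rfl fun m _ => (Finset.mul_sum _ _ _).symm
      _ = 0 := Finset.sum_eq_zero fun m hm => by
          rw [hcoord m (Finset.mem_range.mp hm), mul_zero]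
  have hsingle : ∑ j, c j * Q.eval (z j) = c i * Q.eval (z i) :=
    Finset.sum_eq_single i (fun j _ hj => by rw [hQj j hj, mul_zero])
      (fun h => absurd (Finset.mem_univ i) h)
  rw [hsingle] at key
  rcases mul_eq_zero.mp key with h | h
  · exact hci h
  · exact hQi h
end

section
/- For $k \ge 4$, in the bipartite incidence graph $D_k(q)$, any two distinct points $p, p' \in \mathbb{F}_q^k$ are joined by at most 2 internally disjoint paths of length 4; equivalently, $D_k(q)$ contains no copy of $\theta_{4,3}$ with both endpoints in the point class. -/
lemma mline_shift (k : ℕ) {F : Type} [Field F] {x p : Fin k → F} {z : F}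
    (h : p ∈ mline k x z) : mline k x z = mline k p z := by
  obtain ⟨y0, hy0⟩ := h
  ext q
  constructor
  · rintro ⟨y, rfl⟩
    exact ⟨y - y0, by rw [hy0, sub_smul]; abel⟩
  · rintro ⟨y, rfl⟩
    exact ⟨y0 + y, by rw [hy0, add_smul]; abel⟩

lemma vand_indep {F : Type} [Field F] {n k : ℕ} (hnk : n ≤ k) (z : Fin n → F)
    (hz : Function.Injective z) (a : Fin n → F)
    (h : ∑ i, a i • mvec k (z i) = 0) : a = 0 := by
  apply Matrix.eq_zero_of_forall_pow_sum_mul_pow_eq_zero hz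
  intro i
  have := congrFun h ⟨(i : ℕ), lt_of_lt_of_le i.2 hnk⟩
  simpa [mvec, Finset.sum_apply] using this

lemma inj3' {F : Type} [Field F] {u v w : F} (huv : u ≠ v) (huw : u ≠ w) (hvw : v ≠ w) :
    Function.Injective ![u, v, w] := by
  intro i j h
  fin_cases i <;> fin_cases j <;> simp_all

lemma indep3 {F : Type} [Field F] {k : ℕ} (hk : 3 ≤ k) {u v w : F}
    (huv : u ≠ v) (huw : u ≠ w) (hvw : v ≠ w) {c0 c1 c2 : F}
    (h : c0 • mvec k u + c1 • mvec k v + c2 • mvec k w = 0) :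
    c0 = 0 ∧ c1 = 0 ∧ c2 = 0 := by
  have := vand_indep hk ![u, v, w] (inj3' huv huw hvw) ![c0, c1, c2]
    (by simpa [Fin.sum_univ_three] using h)
  refine ⟨congrFun this 0, congrFun this 1, congrFun this 2⟩

lemma inj4' {F : Type} [Field F] {u v w t : F} (huv : u ≠ v) (huw : u ≠ w) (hut : u ≠ t)
    (hvw : v ≠ w) (hvt : v ≠ t) (hwt : w ≠ t) :
    Function.Injective ![u, v, w, t] := by
  intro i j h
  fin_cases i <;> fin_cases j <;> simp_all

lemma indep4 {F : Type} [Field F] {k : ℕ} (hk : 4 ≤ k) {u v w t : F}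
    (huv : u ≠ v) (huw : u ≠ w) (hut : u ≠ t) (hvw : v ≠ w) (hvt : v ≠ t) (hwt : w ≠ t)
    {c0 c1 c2 c3 : F}
    (h : c0 • mvec k u + c1 • mvec k v + c2 • mvec k w + c3 • mvec k t = 0) :
    c0 = 0 ∧ c1 = 0 ∧ c2 = 0 ∧ c3 = 0 := by
  have := vand_indep hk ![u, v, w, t] (inj4' huv huw hut hvw hvt hwt) ![c0, c1, c2, c3]
    (by simpa [Fin.sum_univ_four] using h)
  exact ⟨congrFun this 0, congrFun this 1, congrFun this 2, congrFun this 3⟩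

lemma mline_param_inj {k : ℕ} (hk : 2 ≤ k) {F : Type} [Field F] {p : Fin k → F} {z z' : F}
    (h : mline k p z = mline k p z') : z = z' := by
  have h1 : p + (1 : F) • mvec k z ∈ mline k p z := ⟨1, rfl⟩
  rw [h] at h1
  obtain ⟨y, hy⟩ := h1
  have hv : (1 : F) • mvec k z = y • mvec k z' := by
    have := hy
    exact add_left_cancel ((by rw [this]) : p + (1:F) • mvec k z = p + y • mvec k z')
  have h0 := congrFun hv ⟨0, by omega⟩
  have h1' := congrFun hv ⟨1, by omega⟩
  simp [mvec] at h0 h1'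
  rw [← h0] at h1'
  simpa using h1'

/-- For `k ≥ 4`, any two distinct points of `F^k` are joined by at most two
internally disjoint paths of length 4 in `D_k(q)`: there is no `θ_{4,3}` with
both endpoints in the point class. -/
theorem stmt_12 (k : ℕ) (hk : 4 ≤ k) (F : Type) [Field F] [Fintype F]
    (p p' : Fin k → F) (hpp : p ≠ p')
    (p2 : Fin 3 → (Fin k → F)) (hp2 : Function.Injective p2)
    (hp2p : ∀ j, p2 j ≠ p ∧ p2 j ≠ p')
    (L1 L2 : Fin 3 → Set (Fin k → F))
    (hL1 : ∀ j, ∃ x z, L1 j = mline k x z) (hL2 : ∀ j, ∃ x z, L2 j = mline k x z)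
    (hL1inj : Function.Injective L1) (hL2inj : Function.Injective L2)
    (hL12 : ∀ j j', L1 j ≠ L2 j')
    (hinc : ∀ j, p ∈ L1 j ∧ p2 j ∈ L1 j ∧ p2 j ∈ L2 j ∧ p' ∈ L2 j) :
    False := by
  have hk2 : 2 ≤ k := by omega
  -- normalize the lines to base points p and p'
  have key1 : ∀ j, ∃ z, L1 j = mline k p z := by
    intro j
    obtain ⟨x, z, hxz⟩ := hL1 j
    exact ⟨z, hxz.trans (mline_shift k (hxz ▸ (hinc j).1))⟩
  have key2 : ∀ j, ∃ z, L2 j = mline k p' z := by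
    intro j
    obtain ⟨x, z, hxz⟩ := hL2 j
    exact ⟨z, hxz.trans (mline_shift k (hxz ▸ (hinc j).2.2.2))⟩
  choose z1 hz1 using key1
  choose z2 hz2 using key2
  have hz1inj : Function.Injective z1 := by
    intro i j h
    exact hL1inj (by rw [hz1, hz1, h])
  have hz2inj : Function.Injective z2 := by
    intro i j h
    exact hL2inj (by rw [hz2, hz2, h])
  -- coordinates of the middle points
  have key3 : ∀ j, ∃ y : F, y ≠ 0 ∧ p2 j = p + y • mvec k (z1 j) := by
    intro j
    obtain ⟨y, hy⟩ := (hz1 j) ▸ (hinc j).2.1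
    refine ⟨y, fun h0 => (hp2p j).1 ?_, hy⟩
    simp [h0] at hy; exact hy
  have key4 : ∀ j, ∃ y : F, y ≠ 0 ∧ p2 j = p' + y • mvec k (z2 j) := by
    intro j
    obtain ⟨y, hy⟩ := (hz2 j) ▸ (hinc j).2.2.1
    refine ⟨y, fun h0 => (hp2p j).2 ?_, hy⟩
    simp [h0] at hy; exact hy
  choose a ha0 ha using key3
  choose b hb0 hb using key4
  -- z1 j ≠ z2 j'
  have hzw : ∀ j, z1 j ≠ z2 j := by
    intro j h
    apply hL12 j j
    rw [hz1 j, hz2 j, mline_shift k ((hz1 j) ▸ (hinc j).2.1 : p2 j ∈ mline k p (z1 j)),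
      mline_shift k ((hz2 j) ▸ (hinc j).2.2.1 : p2 j ∈ mline k p' (z2 j)), h]
  -- key vector equation
  have E : ∀ j, (b j) • mvec k (z2 j) - (a j) • mvec k (z1 j) = p - p' := by
    intro j
    have := (ha j).symm.trans (hb j)
    have h2 : p + a j • mvec k (z1 j) - p' - a j • mvec k (z1 j)
        = p' + b j • mvec k (z2 j) - p' - a j • mvec k (z1 j) := by rw [this]
    calc (b j) • mvec k (z2 j) - (a j) • mvec k (z1 j)
        = p' + b j • mvec k (z2 j) - p' - a j • mvec k (z1 j) := by abel
      _ = p + a j • mvec k (z1 j) - p' - a j • mvec k (z1 j) := h2.symm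
      _ = p - p' := by abel
  -- claim C : cross equality forces swap
  have hC : ∀ j j', j ≠ j' → z1 j = z2 j' → z1 j' = z2 j := by
    intro j j' hjj' ht
    by_contra hne
    have he : b j • mvec k (z2 j) - a j • mvec k (z1 j)
        - (b j' • mvec k (z2 j') - a j' • mvec k (z1 j')) = 0 := by
      rw [E j, E j']; abel
    rw [← ht] at he
    have h3 : (b j) • mvec k (z2 j) + (-(a j) - b j') • mvec k (z1 j)
        + (a j') • mvec k (z1 j') = 0 := by
      rw [← he]; rw [sub_smul, neg_smul]; abel
    have := indep3 (by omega) (fun h => hzw j h.symm)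
      (fun h : z2 j = z1 j' => hne h.symm) (fun h => hjj' (hz1inj h)) h3
    exact ha0 j' this.2.2
  -- claim D : some cross equality holds
  have hD : ∀ j j', j ≠ j' → z1 j = z2 j' ∨ z1 j' = z2 j := by
    intro j j' hjj'
    by_contra hcon
    push_neg at hcon
    have he : (-(a j)) • mvec k (z1 j) + (b j) • mvec k (z2 j)
        + (a j') • mvec k (z1 j') + (-(b j')) • mvec k (z2 j') = 0 := by
      have := (E j).trans (E j').symm
      rw [neg_smul, neg_smul]
      calc -(a j • mvec k (z1 j)) + b j • mvec k (z2 j) + a j' • mvec k (z1 j')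
            + -(b j' • mvec k (z2 j'))
          = (b j • mvec k (z2 j) - a j • mvec k (z1 j))
            - (b j' • mvec k (z2 j') - a j' • mvec k (z1 j')) := by abel
        _ = 0 := by rw [this]; abel
    have := indep4 hk (hzw j) (fun h => hjj' (hz1inj h)) hcon.1
      (fun h : z2 j = z1 j' => hcon.2 h.symm)
      (fun h => hjj' (hz2inj h)) (hzw j') he
    have := this.1
    exact ha0 j (by simpa using neg_eq_zero.mp this)
  -- combine
  have h01 : z1 0 = z2 1 := by
    rcases hD 0 1 (by decide) with h | h
    · exact h
    · exact (hC 1 0 (by decide) h)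
  have h02 : z1 0 = z2 2 := by
    rcases hD 0 2 (by decide) with h | h
    · exact h
    · exact (hC 2 0 (by decide) h)
  have : (1 : Fin 3) = 2 := hz2inj (h01.symm.trans h02)
  exact absurd this (by decide)
end

section
/- If $p_1 \ell_1 p_2 \ell_2 \cdots p_t \ell_t p_1$ is a cycle in $D_k(q)$ where line $\ell_i$ has direction parameter $z_i$, then there exist nonzero coefficients $a_1, \dots, a_t \in \mathbb{F}_q$ with $\sum_{i=1}^t a_i (1, z_i, z_i^2, \dots, z_i^{k-1}) = 0$. -/
/-- Any cycle of the incidence graph yields a vanishing linear combination of the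
moment-curve direction vectors with all coefficients nonzero. -/
theorem stmt_18 (k t : ℕ) [NeZero t] (ht : 2 ≤ t) (F : Type) [Field F] [Fintype F]
    (p : Fin t → (Fin k → F)) (hp : Function.Injective p)
    (x : Fin t → (Fin k → F)) (z : Fin t → F)
    (hLinj : Function.Injective (fun i => mline k (x i) (z i)))
    (hinc : ∀ i, p i ∈ mline k (x i) (z i) ∧ p (i + 1) ∈ mline k (x i) (z i)) :
    ∃ a : Fin t → F, (∀ i, a i ≠ 0) ∧ ∑ i, a i • mvec k (z i) = 0 := by
  choose y hy using fun i => (hinc i).1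
  choose y' hy' using fun i => (hinc i).2
  refine ⟨fun i => y' i - y i, ?_, ?_⟩
  · intro i h
    have hpe : p (i + 1) = p i := by
      rw [hy i, hy' i, sub_eq_zero.mp h]
    have : (i : Fin t) + 1 = i := hp hpe
    have h1 : (1 : Fin t) = 0 := by
      have := congrArg (fun j => j - i) this
      simpa [add_sub_cancel_right] using this
    have h2 := congrArg Fin.val h1
    simp [Fin.val_one'] at h2
    omega
  · have key : ∀ i, (y' i - y i) • mvec k (z i) = p (i + 1) - p i := by
      intro i
      rw [hy i, hy' i, sub_smul]
      abel
    rw [Finset.sum_congr rfl fun i _ => key i, Finset.sum_sub_distrib, sub_eq_zero]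
    exact Fintype.sum_equiv (Equiv.addRight 1) _ _ (fun i => rfl)
end

section
/- For $k \ge 2$, the incidence graph $D_k(q)$ shows that $\mathrm{ex}(2q^k, C_4) \ge q^{k+1}$ in the sense that there exists a $C_4$-free graph on $2q^k$ vertices with $q^{k+1}$ edges. -/
/-!
The incidence graph is bipartite, so a 4-cycle consists of two distinct points `p, p'` on two
distinct common lines `ℓ(x, z)`, `ℓ(x', z')`. Then `p - p'` is a nonzero multiple of both
`(1, z, …, z^(k-1))` and `(1, z', …, z'^(k-1))` with the same factor `p 0 - p' 0`, so these
vectors agree; as `k ≥ 2` their second coordinates give `z = z'`, and the lines coincide.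
There are `q^k` lines, each with `q` points, hence `q^(k+1)` edges.
-/

namespace SimpleGraph

variable {α β : Type*}

def incidenceGraph (r : α → β → Prop) : SimpleGraph (α ⊕ β) where
  Adj
    | .inl p, .inr l => r p l
    | .inr l, .inl p => r p l
    | _, _ => False
  symm := ⟨by rintro (p | l) (p' | l') h <;> exact h⟩
  loopless := ⟨by rintro (p | l) h <;> exact h⟩

variable {r : α → β → Prop}

lemma ncard_edgeSet_incidenceGraph :
    (incidenceGraph r).edgeSet.ncard = Nat.card {x : α × β // r x.1 x.2} := by
  refine (Nat.card_eq_of_bijective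
    (fun x => (⟨s(.inl x.1.1, .inr x.1.2), x.2⟩ : (incidenceGraph r).edgeSet)) ⟨?_, ?_⟩).symm
  · rintro ⟨⟨p, l⟩, h⟩ ⟨⟨p', l'⟩, h'⟩ he
    simpa [Sym2.eq_iff] using congrArg Subtype.val he
  · rintro ⟨e, he⟩
    induction e using Sym2.ind with
    | _ u v =>
      rcases u with p | l <;> rcases v with p' | l'
      all_goals first
        | exact he.elim
        | exact ⟨⟨(p, l'), he⟩, rfl⟩
        | exact ⟨⟨(p', l), he⟩, Subtype.ext Sym2.eq_swap⟩

lemma incidenceGraph_not_square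
    (hr : ∀ ⦃p p' l l'⦄, p ≠ p' → r p l → r p' l → r p l' → r p' l' → l = l')
    {u x w y : α ⊕ β} (hux : (incidenceGraph r).Adj u x) (hxw : (incidenceGraph r).Adj x w)
    (hwy : (incidenceGraph r).Adj w y) (hyu : (incidenceGraph r).Adj y u)
    (huw : u ≠ w) (hxy : x ≠ y) : False := by
  rcases u with p | l <;> rcases x with p₁ | l₁ <;> rcases w with p' | l' <;>
    rcases y with p₂ | l₂
  all_goals first
    | exact hux.elim | exact hxw.elim | exact hwy.elim | exact hyu.elim | skip
  · exact hxy (congrArg _ (hr (fun h => huw (congrArg _ h)) hux hxw hyu hwy))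
  · exact huw (congrArg _ (hr (fun h => hxy (congrArg _ h)) hux hyu hxw hwy))

lemma incidenceGraph_cycle_length_ne_four
    (hr : ∀ ⦃p p' l l'⦄, p ≠ p' → r p l → r p' l → r p l' → r p' l' → l = l')
    {v : α ⊕ β} (c : (incidenceGraph r).Walk v v) (hc : c.IsCycle) : c.length ≠ 4 := by
  intro hlen
  have adj (i : ℕ) (hi : i < 4) : (incidenceGraph r).Adj (c.getVert i) (c.getVert (i + 1)) :=
    c.adj_getVert_succ (hlen ▸ hi)
  have last : c.getVert 4 = c.getVert 0 := by rw [← hlen, Walk.getVert_length, Walk.getVert_zero]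
  exact incidenceGraph_not_square hr (adj 0 (by norm_num)) (adj 1 (by norm_num))
    (adj 2 (by norm_num)) (last ▸ adj 3 (by norm_num))
    (hc.getVert_sub_one_ne_getVert_add_one (i := 1) (by omega))
    (hc.getVert_sub_one_ne_getVert_add_one (i := 2) (by omega))

end SimpleGraph

section MomentCurve

variable {m : ℕ} {F : Type} [Field F]

/-- Every moment-curve line meets the hyperplane `{p | p 0 = 0}` exactly once, as
`mvec _ z 0 = 1`; so `(a, z)` parametrizes the lines `mline (m + 1) (Fin.cons 0 a) z` of
`D_{m+1}(q)` bijectively. -/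
def momentLine (l : (Fin m → F) × F) : Set (Fin (m + 1) → F) :=
  mline (m + 1) (Fin.cons 0 l.1) l.2

lemma mem_momentLine_iff {p : Fin (m + 1) → F} {l : (Fin m → F) × F} :
    p ∈ momentLine l ↔ p = Fin.cons 0 l.1 + p 0 • mvec (m + 1) l.2 := by
  refine ⟨?_, fun h => ⟨p 0, h⟩⟩
  rintro ⟨y, rfl⟩
  simp [mvec]

lemma eq_of_mem_momentLine (hm : 1 ≤ m) {p p' : Fin (m + 1) → F} {l l' : (Fin m → F) × F}
    (hpp' : p ≠ p') (hpl : p ∈ momentLine l) (hp'l : p' ∈ momentLine l)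
    (hpl' : p ∈ momentLine l') (hp'l' : p' ∈ momentLine l') : l = l' := by
  obtain ⟨a, z⟩ := l
  obtain ⟨a', z'⟩ := l'
  rw [mem_momentLine_iff] at hpl hp'l hpl' hp'l'
  have h0 : p 0 - p' 0 ≠ 0 := sub_ne_zero.2 fun h => hpp' (by rw [hpl, hp'l, h])
  have hdiff : (p 0 - p' 0) • mvec (m + 1) z = (p 0 - p' 0) • mvec (m + 1) z' := by
    rw [sub_smul, sub_smul, eq_sub_of_add_eq' hpl.symm, eq_sub_of_add_eq' hp'l.symm,
      eq_sub_of_add_eq' hpl'.symm, eq_sub_of_add_eq' hp'l'.symm]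
    abel
  have hz : z = z' := by
    simpa [mvec] using congrFun (smul_right_injective _ h0 hdiff) ⟨1, by omega⟩
  subst hz
  have ha : (Fin.cons 0 a : Fin (m + 1) → F) = Fin.cons 0 a' :=
    add_right_cancel (hpl.symm.trans hpl')
  rw [(Fin.cons_inj.1 ha).2]

def momentLineIncidenceEquiv :
    {x : (Fin (m + 1) → F) × ((Fin m → F) × F) // x.1 ∈ momentLine x.2} ≃
      ((Fin m → F) × F) × F where
  toFun x := (x.1.2, x.1.1 0)
  invFun x := ⟨(Fin.cons 0 x.1.1 + x.2 • mvec (m + 1) x.1.2, x.1), x.2, rfl⟩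
  left_inv x := Subtype.ext (Prod.ext (mem_momentLine_iff.1 x.2).symm rfl)
  right_inv x := by simp [mvec]

lemma card_momentLine_incidences [Fintype F] :
    Nat.card {x : (Fin (m + 1) → F) × ((Fin m → F) × F) // x.1 ∈ momentLine x.2} =
      Fintype.card F ^ (m + 2) := by
  rw [Nat.card_congr momentLineIncidenceEquiv, Nat.card_eq_fintype_card]
  simp only [Fintype.card_prod, Fintype.card_fun, Fintype.card_fin]
  ring

variable (m F) in
def momentCurveGraph : SimpleGraph ((Fin (m + 1) → F) ⊕ ((Fin m → F) × F)) :=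
  SimpleGraph.incidenceGraph fun p l => p ∈ momentLine l

end MomentCurve

/-- For `k ≥ 2`, there is a `C₄`-free graph on `2 q^k` vertices with `q^(k+1)`
edges, namely the incidence graph `D_k(q)`. -/
theorem stmt_19 (k : ℕ) (hk : 2 ≤ k) (F : Type) [Field F] [Fintype F] :
    ∃ (V : Type) (_ : Fintype V) (G : SimpleGraph V),
      Fintype.card V = 2 * Fintype.card F ^ k ∧
      G.edgeSet.ncard = Fintype.card F ^ (k + 1) ∧
      ∀ (v : V) (c : G.Walk v v), c.IsCycle → c.length ≠ 4 := by
  obtain ⟨m, rfl⟩ : ∃ m, k = m + 1 := ⟨k - 1, by omega⟩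
  refine ⟨_, inferInstance, momentCurveGraph m F, ?_, ?_, ?_⟩
  · simp only [Fintype.card_sum, Fintype.card_prod, Fintype.card_fun, Fintype.card_fin]
    ring
  · rw [momentCurveGraph, SimpleGraph.ncard_edgeSet_incidenceGraph, card_momentLine_incidences]
  · have hm : 1 ≤ m := by omega
    exact fun v c hc => SimpleGraph.incidenceGraph_cycle_length_ne_four
      (fun _ _ _ _ => eq_of_mem_momentLine hm) c hc
end
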